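/- Let X, Y be metric spaces with bounded geometry and p ∈ [1,∞). Suppose U : ℓ^p(X) → ℓ^p(Y) is an invertible bounded operator of the form (Uξ)(y) = h(y) ξ(g⁻¹(y)) for a unimodular function h : Y → 𝕋 and a bijection g : X → Y, and suppose conjugation by U maps B^p_u(X) into B^p_u(Y) and conjugation by U⁻¹ maps B^p_u(Y) into B^p_u(X). Then for every R ≥ 0 there exists S ≥ 0 such that d(x₁,x₂) ≤ R implies d(g(x₁),g(x₂)) ≤ S; that is, g is uniformly expansive. Consequently g is a bijective coarse equivalence. -/

import Mathlib

open scoped ENNReal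

/-- A map between (pseudo)metric spaces is uniformly expansive if points at distance at most `R`
are sent to points at distance at most `S = S(R)`. -/
def UniformlyExpansive {X Y : Type*} [PseudoMetricSpace X] [PseudoMetricSpace Y]
    (f : X → Y) : Prop :=
  ∀ R : ℝ, 0 < R → ∃ S : ℝ, 0 < S ∧ ∀ x₁ x₂ : X, dist x₁ x₂ ≤ R → dist (f x₁) (f x₂) ≤ S

/-- Two maps are close if they are at uniformly bounded distance. -/
def Close {X Y : Type*} [PseudoMetricSpace Y] (f g : X → Y) : Prop :=
  ∃ C : ℝ, 0 < C ∧ ∀ x : X, dist (f x) (g x) ≤ C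

/-- `f : X → Y` is a coarse equivalence if it is uniformly expansive and admits a uniformly
expansive coarse inverse. -/
def IsCoarseEquivalence {X Y : Type*} [PseudoMetricSpace X] [PseudoMetricSpace Y]
    (f : X → Y) : Prop :=
  UniformlyExpansive f ∧
    ∃ g : Y → X, UniformlyExpansive g ∧ Close (f ∘ g) id ∧ Close (g ∘ f) id

/-- A metric space has bounded geometry if balls of radius `R` have uniformly bounded
cardinality. -/
def BoundedGeometry (X : Type*) [PseudoMetricSpace X] : Prop :=
  ∀ R : ℝ, 0 ≤ R → ∃ N : ℕ, ∀ x : X,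
    (Metric.closedBall x R).Finite ∧ (Metric.closedBall x R).ncard ≤ N

/-- The standard basis vector `δ_x` of `ℓ^p(X)`. -/
noncomputable def delta {X : Type*} (p : ℝ≥0∞) (x : X) : lp (fun _ : X => ℂ) p :=
  letI := Classical.decEq X
  lp.single p x 1

/-- The matrix coefficient `T_{xy} = (T δ_y)(x)` of a bounded operator on `ℓ^p`. -/
noncomputable def matCoef {X Y : Type*} (p : ℝ≥0∞) [Fact (1 ≤ p)]
    (T : lp (fun _ : X => ℂ) p →L[ℂ] lp (fun _ : Y => ℂ) p) (y : Y) (x : X) : ℂ :=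
  T (delta p x) y

/-- `T` has propagation at most `R`. -/
def HasPropagationLE {X : Type*} [PseudoMetricSpace X] (p : ℝ≥0∞) [Fact (1 ≤ p)]
    (T : lp (fun _ : X => ℂ) p →L[ℂ] lp (fun _ : X => ℂ) p) (R : ℝ) : Prop :=
  ∀ x y : X, matCoef p T x y ≠ 0 → dist x y ≤ R

/-- `T` has finite propagation. -/
def FiniteProp {X : Type*} [PseudoMetricSpace X] (p : ℝ≥0∞) [Fact (1 ≤ p)]
    (T : lp (fun _ : X => ℂ) p →L[ℂ] lp (fun _ : X => ℂ) p) : Prop :=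
  ∃ R : ℝ, 0 ≤ R ∧ HasPropagationLE p T R

/-- The `ℓ^p` uniform Roe algebra of `X`, as the operator-norm closure of the set of
finite propagation bounded operators on `ℓ^p(X)`. -/
noncomputable def RoeAlgSet (X : Type*) [PseudoMetricSpace X] (p : ℝ≥0∞) [Fact (1 ≤ p)] :
    Set (lp (fun _ : X => ℂ) p →L[ℂ] lp (fun _ : X => ℂ) p) :=
  closure {T | FiniteProp p T}

/-- Conjugation by a continuous linear equivalence, as a map on bounded operators. -/
noncomputable def conjEquiv {E F : Type*} [NormedAddCommGroup E] [NormedSpace ℂ E]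
    [NormedAddCommGroup F] [NormedSpace ℂ F] (U : E ≃L[ℂ] F) (T : E →L[ℂ] E) :
    F →L[ℂ] F :=
  (U : E →L[ℂ] F).comp (T.comp (U.symm : F →L[ℂ] E))


set_option linter.unusedSectionVars false



section shift
variable {X : Type*} (p : ℝ≥0∞) [Fact (1 ≤ p)]

lemma p_ne_zero : p ≠ 0 := by
  have := (Fact.out : 1 ≤ p); intro h; rw [h] at this; simp at this

lemma ptR_pos (hp : p ≠ ∞) : 0 < p.toReal :=
  ENNReal.toReal_pos (p_ne_zero p) hp

noncomputable def shiftFun (a b : ℕ → X) (ξ : X → ℂ) : X → ℂ :=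
  Function.extend a (fun n => ξ (b n)) 0

variable {a b : ℕ → X}

lemma shiftFun_apply_a (ha : Function.Injective a) (ξ : X → ℂ) (n : ℕ) :
    shiftFun a b ξ (a n) = ξ (b n) :=
  ha.extend_apply _ _ _

lemma shiftFun_apply_of_not_mem (ξ : X → ℂ) {x : X} (hx : x ∉ Set.range a) :
    shiftFun a b ξ x = 0 :=
  Function.extend_apply' _ _ _ (by simpa [Set.mem_range] using hx)

lemma shiftFun_add (ha : Function.Injective a) (ξ η : X → ℂ) :
    shiftFun a b (ξ + η) = shiftFun a b ξ + shiftFun a b η := by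
  funext x
  rcases em (x ∈ Set.range a) with ⟨n, rfl⟩ | hx
  · simp [shiftFun_apply_a ha]
  · simp [shiftFun_apply_of_not_mem _ hx]

lemma shiftFun_smul (ha : Function.Injective a) (c : ℂ) (ξ : X → ℂ) :
    shiftFun a b (c • ξ) = c • shiftFun a b ξ := by
  funext x
  rcases em (x ∈ Set.range a) with ⟨n, rfl⟩ | hx
  · simp [shiftFun_apply_a ha]
  · simp [shiftFun_apply_of_not_mem _ hx]

lemma shiftFun_norm_rpow (ha : Function.Injective a) (ξ : X → ℂ) (hq : 0 < p.toReal) :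
    (fun x => ‖shiftFun a b ξ x‖ ^ p.toReal) =
      Function.extend a (fun n => ‖ξ (b n)‖ ^ p.toReal) 0 := by
  funext x
  rcases em (x ∈ Set.range a) with ⟨n, rfl⟩ | hx
  · rw [shiftFun_apply_a ha, ha.extend_apply]
  · rw [shiftFun_apply_of_not_mem _ hx, Function.extend_apply' _ _ _
      (by simpa [Set.mem_range] using hx)]
    simp [Real.zero_rpow hq.ne']

lemma shiftFun_memℓp (ha : Function.Injective a) (hb : Function.Injective b) (hp : p ≠ ∞)
    (ξ : lp (fun _ : X => ℂ) p) : Memℓp (shiftFun a b ⇑ξ) p := by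
  have hq := ptR_pos p hp
  apply memℓp_gen
  rw [shiftFun_norm_rpow p ha _ hq, summable_extend_zero ha]
  exact ((lp.memℓp ξ).summable hq).comp_injective hb

lemma shiftFun_tsum_le (ha : Function.Injective a) (hb : Function.Injective b) (hp : p ≠ ∞)
    (ξ : lp (fun _ : X => ℂ) p) :
    ∑' x, ‖shiftFun a b ⇑ξ x‖ ^ p.toReal ≤ ∑' x, ‖(ξ : ∀ _ : X, ℂ) x‖ ^ p.toReal := by
  have hq := ptR_pos p hp
  have hsupp : Function.support (fun x => ‖shiftFun a b ⇑ξ x‖ ^ p.toReal) ⊆ Set.range a := by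
    intro x hx
    rcases em (x ∈ Set.range a) with hr | hr
    · exact hr
    · exfalso
      apply hx
      simp only [shiftFun_apply_of_not_mem _ hr]
      simp [Real.zero_rpow hq.ne']
  have h1 : ∑' x, ‖shiftFun a b ⇑ξ x‖ ^ p.toReal = ∑' n, ‖(ξ : ∀ _ : X, ℂ) (b n)‖ ^ p.toReal := by
    rw [← ha.tsum_eq hsupp]
    congr 1; funext n; rw [shiftFun_apply_a ha]
  rw [h1]
  exact Summable.tsum_le_tsum_of_inj b hb (fun x _ => Real.rpow_nonneg (norm_nonneg _) _)
    (fun n => le_rfl) (((lp.memℓp ξ).summable hq).comp_injective hb) ((lp.memℓp ξ).summable hq)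

end shift


section op
variable {X : Type*} (p : ℝ≥0∞) [Fact (1 ≤ p)] {a b : ℕ → X}

noncomputable def shiftL (hp : p ≠ ∞) (ha : Function.Injective a) (hb : Function.Injective b) :
    lp (fun _ : X => ℂ) p →ₗ[ℂ] lp (fun _ : X => ℂ) p where
  toFun ξ := ⟨shiftFun a b ⇑ξ, shiftFun_memℓp p ha hb hp ξ⟩
  map_add' ξ η := by
    apply lp.ext
    change shiftFun a b ⇑(ξ + η) = _
    rw [lp.coeFn_add, lp.coeFn_add, shiftFun_add ha]
  map_smul' c ξ := by
    apply lp.ext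
    change shiftFun a b ⇑(c • ξ) = _
    rw [lp.coeFn_smul, shiftFun_smul ha]
    exact (lp.coeFn_smul c (⟨shiftFun a b ⇑ξ, shiftFun_memℓp p ha hb hp ξ⟩ : lp (fun _ : X => ℂ) p)).symm

noncomputable def shiftOp (hp : p ≠ ∞) (ha : Function.Injective a)
    (hb : Function.Injective b) :
    lp (fun _ : X => ℂ) p →L[ℂ] lp (fun _ : X => ℂ) p :=
  LinearMap.mkContinuous (shiftL p hp ha hb) 1 (by
    intro ξ
    have hq := ptR_pos p hp
    rw [one_mul]
    change ‖(⟨shiftFun a b ⇑ξ, shiftFun_memℓp p ha hb hp ξ⟩ : lp (fun _ : X => ℂ) p)‖ ≤ ‖ξ‖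
    rw [lp.norm_eq_tsum_rpow hq, lp.norm_eq_tsum_rpow hq]
    refine Real.rpow_le_rpow (tsum_nonneg fun x => Real.rpow_nonneg (norm_nonneg _) _) ?_
      (by positivity)
    exact shiftFun_tsum_le p ha hb hp ξ)

lemma shiftOp_apply (hp : p ≠ ∞) (ha : Function.Injective a) (hb : Function.Injective b)
    (ξ : lp (fun _ : X => ℂ) p) (x : X) :
    (shiftOp p hp ha hb ξ : ∀ _ : X, ℂ) x = shiftFun a b ⇑ξ x := rfl

end op


section basics
variable {X : Type*} (p : ℝ≥0∞) [Fact (1 ≤ p)]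

lemma delta_apply_self (x : X) : (delta p x : ∀ _ : X, ℂ) x = 1 := by
  simp [delta, lp.single_apply]

lemma delta_apply_ne {x y : X} (h : y ≠ x) : (delta p x : ∀ _ : X, ℂ) y = 0 := by
  simp [delta, lp.single_apply, h]

lemma norm_delta (hp : p ≠ ∞) (x : X) : ‖delta p x‖ = 1 := by
  classical
  have := lp.norm_single (E := fun _ : X => ℂ) (zero_lt_one.trans_le (Fact.out : 1 ≤ p)) x (1 : ℂ)
  simpa [delta] using this

variable {Y : Type*}

lemma norm_matCoef_le (hp : p ≠ ∞)
    (T : lp (fun _ : X => ℂ) p →L[ℂ] lp (fun _ : Y => ℂ) p) (y : Y) (x : X) :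
    ‖matCoef p T y x‖ ≤ ‖T‖ := by
  calc ‖matCoef p T y x‖ ≤ ‖T (delta p x)‖ := lp.norm_apply_le_norm (p_ne_zero p) _ y
    _ ≤ ‖T‖ * ‖delta p x‖ := T.le_opNorm _
    _ = ‖T‖ := by rw [norm_delta p hp, mul_one]

lemma matCoef_sub (T T' : lp (fun _ : X => ℂ) p →L[ℂ] lp (fun _ : Y => ℂ) p) (y : Y) (x : X) :
    matCoef p (T - T') y x = matCoef p T y x - matCoef p T' y x := by
  simp [matCoef, lp.coeFn_sub]

end basics

section matcoef
variable {X : Type*} (p : ℝ≥0∞) [Fact (1 ≤ p)] {a b : ℕ → X}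
variable (hp : p ≠ ∞) (ha : Function.Injective a) (hb : Function.Injective b)

lemma shiftOp_matCoef_ne {x y : X} (hne : matCoef p (shiftOp p hp ha hb) x y ≠ 0) :
    ∃ n, x = a n ∧ y = b n := by
  have : matCoef p (shiftOp p hp ha hb) x y = shiftFun a b ⇑(delta p y) x := rfl
  rw [this] at hne
  rcases em (x ∈ Set.range a) with ⟨n, rfl⟩ | hx
  · refine ⟨n, rfl, ?_⟩
    rw [shiftFun_apply_a ha] at hne
    by_contra hyb
    exact hne (delta_apply_ne p (Ne.symm hyb))
  · exact absurd (shiftFun_apply_of_not_mem _ hx) hne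

lemma shiftOp_delta (n : ℕ) :
    shiftOp p hp ha hb (delta p (b n)) = delta p (a n) := by
  apply lp.ext
  funext x
  have hL : (shiftOp p hp ha hb (delta p (b n)) : ∀ _ : X, ℂ) x
      = shiftFun a b ⇑(delta p (b n)) x := rfl
  rw [hL]
  rcases em (x ∈ Set.range a) with ⟨m, rfl⟩ | hx
  · rw [shiftFun_apply_a ha]
    by_cases hmn : m = n
    · subst hmn
      rw [delta_apply_self, delta_apply_self]
    · rw [delta_apply_ne p (fun hc => hmn (hb hc)), delta_apply_ne p (fun hc => hmn (ha hc))]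
  · rw [shiftFun_apply_of_not_mem _ hx, delta_apply_ne p (fun hc => hx ⟨n, hc.symm⟩)]

end matcoef

section lamperti
variable {X Y : Type*} (p : ℝ≥0∞) [Fact (1 ≤ p)]
variable (U : lp (fun _ : X => ℂ) p ≃L[ℂ] lp (fun _ : Y => ℂ) p)
variable (h : Y → ℂ) (g : X ≃ Y)

lemma U_delta (hh : ∀ y : Y, ‖h y‖ = 1)
    (hU : ∀ (ξ : lp (fun _ : X => ℂ) p) (y : Y), (U ξ) y = h y * ξ (g.symm y)) (x : X) :
    U (delta p x) = h (g x) • delta p (g x) := by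
  apply lp.ext
  funext y
  rw [lp.coeFn_smul, Pi.smul_apply, hU (delta p x) y]
  by_cases hy : y = g x
  · subst hy
    rw [delta_apply_self, Equiv.symm_apply_apply, delta_apply_self, smul_eq_mul]
  · rw [delta_apply_ne p hy, delta_apply_ne p (fun hc => hy (by rw [← hc, Equiv.apply_symm_apply])),
      smul_eq_mul, mul_zero, mul_zero]

lemma h_ne_zero (hh : ∀ y : Y, ‖h y‖ = 1) (y : Y) : h y ≠ 0 := by
  intro hc
  have := hh y
  rw [hc, norm_zero] at this
  norm_num at this

lemma Usymm_delta (hh : ∀ y : Y, ‖h y‖ = 1)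
    (hU : ∀ (ξ : lp (fun _ : X => ℂ) p) (y : Y), (U ξ) y = h y * ξ (g.symm y)) (x : X) :
    U.symm (delta p (g x)) = (h (g x))⁻¹ • delta p x := by
  have h1 := congrArg U.symm (U_delta p U h g hh hU x)
  rw [ContinuousLinearEquiv.symm_apply_apply, map_smul] at h1
  rw [h1, smul_smul, inv_mul_cancel₀ (h_ne_zero h hh (g x)), one_smul]

lemma conj_matCoef (hh : ∀ y : Y, ‖h y‖ = 1)
    (hU : ∀ (ξ : lp (fun _ : X => ℂ) p) (y : Y), (U ξ) y = h y * ξ (g.symm y))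
    (T : lp (fun _ : X => ℂ) p →L[ℂ] lp (fun _ : X => ℂ) p) (x x' : X)
    (hT : T (delta p x') = delta p x) :
    matCoef p (conjEquiv U T) (g x) (g x') = (h (g x'))⁻¹ * h (g x) := by
  have h1 : conjEquiv U T (delta p (g x')) = U (T (U.symm (delta p (g x')))) := rfl
  have h2 : U (T (U.symm (delta p (g x')))) = (h (g x'))⁻¹ • (h (g x) • delta p (g x)) := by
    rw [Usymm_delta p U h g hh hU x', map_smul, hT, map_smul, U_delta p U h g hh hU x]
  unfold matCoef
  rw [h1, h2, lp.coeFn_smul, Pi.smul_apply, lp.coeFn_smul, Pi.smul_apply, delta_apply_self,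
    smul_eq_mul, smul_eq_mul, mul_one]

end lamperti

section combinatorics
variable {X Y : Type*} [MetricSpace X] [MetricSpace Y]

/-- One step of the bad-pair extraction: avoid a finite set. -/
lemma step_lemma (hX : BoundedGeometry X) (g : X ≃ Y) {R : ℝ} (hR : 0 ≤ R)
    (hfail : ∀ S : ℝ, ∃ x₁ x₂ : X, dist x₁ x₂ ≤ R ∧ S < dist (g x₁) (g x₂))
    (A : Finset X) (S : ℝ) :
    ∃ q : X × X, dist q.1 q.2 ≤ R ∧ S < dist (g q.1) (g q.2) ∧ q.1 ∉ A ∧ q.2 ∉ A := by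
  classical
  obtain ⟨N, hN⟩ := hX R hR
  set B : Set X := ↑A ∪ ⋃ x ∈ (A : Set X), Metric.closedBall x R with hB
  have hBfin : B.Finite := (A.finite_toSet).union
    (Set.Finite.biUnion A.finite_toSet (fun x _ => (hN x).1))
  set D : Set ℝ := (fun q : X × X => dist (g q.1) (g q.2)) '' ((A : Set X) ×ˢ B) with hD
  have hDfin : D.Finite := ((A.finite_toSet).prod hBfin).image _
  obtain ⟨M, hM⟩ := hDfin.bddAbove
  obtain ⟨x₁, x₂, hdist, hfar⟩ := hfail (max S M)
  have hM' : ∀ u ∈ (A : Set X), ∀ v ∈ B, dist (g u) (g v) ≤ M := fun u hu v hv =>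
    hM ⟨(u, v), Set.mk_mem_prod hu hv, rfl⟩
  refine ⟨(x₁, x₂), hdist, lt_of_le_of_lt (le_max_left _ _) hfar, ?_, ?_⟩
  · intro hx₁
    have hx₂B : x₂ ∈ B := Or.inr (Set.mem_biUnion hx₁ (by
      simpa [Metric.mem_closedBall, dist_comm] using hdist))
    exact absurd (hM' x₁ hx₁ x₂ hx₂B) (not_le.mpr (lt_of_le_of_lt (le_max_right S M) hfar))
  · intro hx₂
    have hx₁B : x₁ ∈ B := Or.inr (Set.mem_biUnion hx₂ (by
      simpa [Metric.mem_closedBall] using hdist))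
    have := hM' x₂ hx₂ x₁ hx₁B
    rw [dist_comm] at this
    exact absurd this (not_le.mpr (lt_of_le_of_lt (le_max_right S M) hfar))

/-- Extraction of injective sequences of bad pairs. -/
lemma exists_bad_seq (hX : BoundedGeometry X) (g : X ≃ Y) {R : ℝ} (hR : 0 ≤ R)
    (hfail : ∀ S : ℝ, ∃ x₁ x₂ : X, dist x₁ x₂ ≤ R ∧ S < dist (g x₁) (g x₂)) :
    ∃ a b : ℕ → X, Function.Injective a ∧ Function.Injective b ∧
      (∀ n, dist (a n) (b n) ≤ R) ∧ ∀ n : ℕ, (n : ℝ) < dist (g (a n)) (g (b n)) := by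
  classical
  have hstep := step_lemma hX g hR hfail
  -- state: accumulated forbidden Finset
  let F : Finset X → ℕ → X × X := fun A n => (hstep A n).choose
  let Acc : ℕ → Finset X := fun n =>
    Nat.rec (∅ : Finset X) (fun m Am => Am ∪ {(F Am m).1, (F Am m).2}) n
  let pair : ℕ → X × X := fun n => F (Acc n) n
  have hAcc_succ : ∀ n, Acc (n + 1) = Acc n ∪ {(pair n).1, (pair n).2} := fun n => rfl
  have hspec : ∀ n, dist (pair n).1 (pair n).2 ≤ R ∧
      (n : ℝ) < dist (g (pair n).1) (g (pair n).2) ∧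
      (pair n).1 ∉ Acc n ∧ (pair n).2 ∉ Acc n := fun n => (hstep (Acc n) n).choose_spec
  have hmono : ∀ m n : ℕ, m ≤ n → Acc m ⊆ Acc n := by
    intro m n hmn
    induction n with
    | zero => simp_all
    | succ k ih =>
      rcases Nat.lt_or_ge m (k+1) with hk | hk
      · have := ih (Nat.lt_succ_iff.mp hk)
        rw [hAcc_succ k]
        exact this.trans (Finset.subset_union_left)
      · have : m = k + 1 := le_antisymm hmn hk
        subst this
        exact subset_rfl
  have hmem : ∀ m, (pair m).1 ∈ Acc (m + 1) ∧ (pair m).2 ∈ Acc (m + 1) := by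
    intro m
    rw [hAcc_succ m]
    constructor
    · exact Finset.mem_union_right _ (by simp)
    · exact Finset.mem_union_right _ (by simp)
  have hlt : ∀ m n : ℕ, m < n →
      (pair m).1 ∈ Acc n ∧ (pair m).2 ∈ Acc n := by
    intro m n hmn
    have h1 := hmem m
    exact ⟨hmono (m+1) n hmn h1.1, hmono (m+1) n hmn h1.2⟩
  refine ⟨fun n => (pair n).1, fun n => (pair n).2, ?_, ?_, fun n => (hspec n).1,
    fun n => (hspec n).2.1⟩
  · intro m n hmn
    simp only at hmn
    by_contra hne
    rcases Ne.lt_or_gt hne with hlt' | hlt'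
    · exact (hspec n).2.2.1 (by rw [← hmn]; exact (hlt m n hlt').1)
    · exact (hspec m).2.2.1 (by rw [hmn]; exact (hlt n m hlt').1)
  · intro m n hmn
    simp only at hmn
    by_contra hne
    rcases Ne.lt_or_gt hne with hlt' | hlt'
    · exact (hspec n).2.2.2 (by rw [← hmn]; exact (hlt m n hlt').2)
    · exact (hspec m).2.2.2 (by rw [hmn]; exact (hlt n m hlt').2)

end combinatorics

theorem roe_key {X Y : Type*} [MetricSpace X] [MetricSpace Y] (hX : BoundedGeometry X)
    (p : ℝ≥0∞) [Fact (1 ≤ p)] (hp : p ≠ ∞)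
    (U : lp (fun _ : X => ℂ) p ≃L[ℂ] lp (fun _ : Y => ℂ) p)
    (h : Y → ℂ) (g : X ≃ Y) (hh : ∀ y : Y, ‖h y‖ = 1)
    (hU : ∀ (ξ : lp (fun _ : X => ℂ) p) (y : Y), (U ξ) y = h y * ξ (g.symm y))
    (hconj : ∀ T ∈ RoeAlgSet X p, conjEquiv U T ∈ RoeAlgSet Y p)
    (R : ℝ) (hR : 0 ≤ R) :
    ∃ S : ℝ, 0 ≤ S ∧ ∀ x₁ x₂ : X, dist x₁ x₂ ≤ R → dist (g x₁) (g x₂) ≤ S := by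
  by_contra hfail
  push_neg at hfail
  have hfail' : ∀ S : ℝ, ∃ x₁ x₂ : X, dist x₁ x₂ ≤ R ∧ S < dist (g x₁) (g x₂) := by
    intro S
    obtain ⟨x₁, x₂, h1, h2⟩ := hfail (max S 0) (le_max_right _ _)
    exact ⟨x₁, x₂, h1, lt_of_le_of_lt (le_max_left S 0) h2⟩
  obtain ⟨a, b, ha, hb, hdist, hfar⟩ := exists_bad_seq hX g hR hfail'
  set T := shiftOp p hp ha hb with hT
  have hTRoe : T ∈ RoeAlgSet X p := subset_closure ⟨R, hR, fun x y hne => by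
    obtain ⟨n, rfl, rfl⟩ := shiftOp_matCoef_ne p hp ha hb hne
    exact hdist n⟩
  have hconjT := hconj T hTRoe
  rw [RoeAlgSet, Metric.mem_closure_iff] at hconjT
  obtain ⟨T', hT', hd⟩ := hconjT (1/2) (by norm_num)
  obtain ⟨R', hR'0, hprop⟩ := hT'
  obtain ⟨n, hn⟩ := exists_nat_ge R'
  have hfarn : R' < dist (g (a n)) (g (b n)) := lt_of_le_of_lt hn (hfar n)
  have hT'0 : matCoef p T' (g (a n)) (g (b n)) = 0 := by
    by_contra hne
    exact absurd (hprop _ _ hne) (not_le.mpr hfarn)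
  have hcm : matCoef p (conjEquiv U T) (g (a n)) (g (b n)) = (h (g (b n)))⁻¹ * h (g (a n)) :=
    conj_matCoef p U h g hh hU T (a n) (b n) (shiftOp_delta p hp ha hb n)
  have hnorm1 : ‖matCoef p (conjEquiv U T) (g (a n)) (g (b n))‖ = 1 := by
    rw [hcm, norm_mul, norm_inv, hh, hh]
    norm_num
  have hle : ‖matCoef p (conjEquiv U T) (g (a n)) (g (b n))
        - matCoef p T' (g (a n)) (g (b n))‖ ≤ ‖conjEquiv U T - T'‖ := by
    rw [← matCoef_sub]
    exact norm_matCoef_le p hp _ _ _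
  rw [hT'0, sub_zero, hnorm1] at hle
  rw [dist_eq_norm] at hd
  linarith
/-- If an invertible bounded operator `U : ℓ^p(X) → ℓ^p(Y)` of the Lamperti form
`(Uξ)(y) = h(y) ξ(g⁻¹(y))` conjugates `B^p_u(X)` into `B^p_u(Y)` and vice versa, then `g` is
uniformly expansive for each `R`, and consequently `g` is a bijective coarse equivalence. -/
theorem lamperti_map_is_coarse_equivalence {X Y : Type*}
    [MetricSpace X] [MetricSpace Y] (hX : BoundedGeometry X) (hY : BoundedGeometry Y)
    (p : ℝ≥0∞) [Fact (1 ≤ p)] (hp : p ≠ ∞)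
    (U : lp (fun _ : X => ℂ) p ≃L[ℂ] lp (fun _ : Y => ℂ) p)
    (h : Y → ℂ) (g : X ≃ Y) (hh : ∀ y : Y, ‖h y‖ = 1)
    (hU : ∀ (ξ : lp (fun _ : X => ℂ) p) (y : Y), (U ξ) y = h y * ξ (g.symm y))
    (hconj : ∀ T ∈ RoeAlgSet X p, conjEquiv U T ∈ RoeAlgSet Y p)
    (hconj' : ∀ T ∈ RoeAlgSet Y p, conjEquiv U.symm T ∈ RoeAlgSet X p) :
    (∀ R : ℝ, 0 ≤ R → ∃ S : ℝ, 0 ≤ S ∧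
        ∀ x₁ x₂ : X, dist x₁ x₂ ≤ R → dist (g x₁) (g x₂) ≤ S) ∧
      UniformlyExpansive (⇑g) ∧ UniformlyExpansive (⇑g.symm) := by
  have key1 : ∀ R : ℝ, 0 ≤ R → ∃ S : ℝ, 0 ≤ S ∧
      ∀ x₁ x₂ : X, dist x₁ x₂ ≤ R → dist (g x₁) (g x₂) ≤ S :=
    fun R hR => roe_key hX p hp U h g hh hU hconj R hR
  have hU' : ∀ (η : lp (fun _ : Y => ℂ) p) (x : X),
      (U.symm η) x = (fun x => (h (g x))⁻¹) x * η (g.symm.symm x) := by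
    intro η x
    have h2 := hU (U.symm η) (g x)
    rw [U.apply_symm_apply, Equiv.symm_apply_apply] at h2
    rw [Equiv.symm_symm, h2, inv_mul_cancel_left₀ (h_ne_zero h hh (g x))]
  have key2 : ∀ R : ℝ, 0 ≤ R → ∃ S : ℝ, 0 ≤ S ∧
      ∀ y₁ y₂ : Y, dist y₁ y₂ ≤ R → dist (g.symm y₁) (g.symm y₂) ≤ S :=
    fun R hR => roe_key hY p hp U.symm (fun x => (h (g x))⁻¹) g.symm
      (fun x => by rw [norm_inv, hh]; norm_num) hU' hconj' R hR
  refine ⟨key1, ?_, ?_⟩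
  · intro R hR
    obtain ⟨S, hS0, hS⟩ := key1 R hR.le
    exact ⟨S + 1, by linarith, fun x₁ x₂ hd => (hS x₁ x₂ hd).trans (by linarith)⟩
  · intro R hR
    obtain ⟨S, hS0, hS⟩ := key2 R hR.le
    exact ⟨S + 1, by linarith, fun y₁ y₂ hd => (hS y₁ y₂ hd).trans (by linarith)⟩
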